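/- arXiv:0711.1477 — 2 statements merged into one kernel-verified Lean document; each statement's English description precedes it below -/
import Mathlib

section
/- Let u ∈ ℝ^n with Σ u_i^2 = 1, and let η_1,...,η_n be i.i.d. uniform on [-1,1]. Then P(|Σ_{i=1}^n u_i η_i| ≥ 1/3) ≥ 4/27. -/
/-!
Write `S = ∑ uᵢ ηᵢ`. By independence and centring, `E S² = ∑ uᵢ² E η² = 1/3`. Since
`E (X + Y)⁴ = E X⁴ + 6 E X² E Y² + E Y⁴` for independent centred `X`, `Y`, the bound
`E X⁴ ≤ 3 (E X²)²` passes to independent centred sums; each `uᵢ ηᵢ` satisfies it because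
`E η⁴ = 1/5 ≤ 3 (1/3)²`, so `E S⁴ ≤ 3 (E S²)² = 1/3`. The Paley–Zygmund inequality for `S²` at
level `θ = 1/3` then gives `P(S² > 1/9) ≥ (2/3)² (1/3)² / (1/3) = 4/27`.
-/

open MeasureTheory ProbabilityTheory Finset

section

variable {Ω : Type*} [MeasurableSpace Ω] {μ : Measure Ω}

section Moments

variable [IsFiniteMeasure μ] {X Y : Ω → ℝ} {n k : ℕ}

lemma MeasureTheory.MemLp.integrable_pow_of_le (hX : MemLp X n μ) (hk : k ≤ n) :
    Integrable (fun ω => X ω ^ k) μ := by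
  refine ((hX.mono_exponent (by exact_mod_cast hk)).integrable_norm_pow').mono'
    (hX.aestronglyMeasurable.pow k) (ae_of_all _ fun ω => ?_)
  simp [norm_pow]

lemma ProbabilityTheory.IndepFun.integral_add_pow (h : IndepFun X Y μ) (hX : MemLp X n μ)
    (hY : MemLp Y n μ) :
    ∫ ω, (X ω + Y ω) ^ n ∂μ =
      ∑ k ∈ range (n + 1), (∫ ω, X ω ^ k ∂μ) * (∫ ω, Y ω ^ (n - k) ∂μ) * n.choose k := by
  have hindep : ∀ k, IndepFun (fun ω => X ω ^ k) (fun ω => Y ω ^ (n - k)) μ := fun k =>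
    h.comp (measurable_id.pow_const k) (measurable_id.pow_const (n - k))
  have hint : ∀ k ∈ range (n + 1),
      Integrable (fun ω => X ω ^ k * Y ω ^ (n - k) * n.choose k) μ := fun k hk =>
    ((hindep k).integrable_mul (hX.integrable_pow_of_le (Nat.lt_succ_iff.mp (mem_range.mp hk)))
      (hY.integrable_pow_of_le (Nat.sub_le n k))).mul_const _
  simp_rw [add_pow]
  rw [integral_finsetSum _ hint]
  refine sum_congr rfl fun k _ => ?_
  rw [integral_mul_const, (hindep k).integral_fun_mul_eq_mul_integral
    (hX.aestronglyMeasurable.pow k) (hY.aestronglyMeasurable.pow (n - k))]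

end Moments

section Centred

variable [IsProbabilityMeasure μ] {X Y : Ω → ℝ}

lemma ProbabilityTheory.IndepFun.integral_add_sq_of_integral_eq_zero (h : IndepFun X Y μ)
    (hX : MemLp X 2 μ) (hY : MemLp Y 2 μ) (hX0 : ∫ ω, X ω ∂μ = 0) (hY0 : ∫ ω, Y ω ∂μ = 0) :
    ∫ ω, (X ω + Y ω) ^ 2 ∂μ = ∫ ω, X ω ^ 2 ∂μ + ∫ ω, Y ω ^ 2 ∂μ := by
  rw [h.integral_add_pow hX hY]
  simp [sum_range_succ, hX0, hY0, add_comm]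

lemma ProbabilityTheory.IndepFun.integral_add_pow_four_of_integral_eq_zero (h : IndepFun X Y μ)
    (hX : MemLp X 4 μ) (hY : MemLp Y 4 μ) (hX0 : ∫ ω, X ω ∂μ = 0) (hY0 : ∫ ω, Y ω ∂μ = 0) :
    ∫ ω, (X ω + Y ω) ^ 4 ∂μ =
      ∫ ω, X ω ^ 4 ∂μ + 6 * (∫ ω, X ω ^ 2 ∂μ) * (∫ ω, Y ω ^ 2 ∂μ) + ∫ ω, Y ω ^ 4 ∂μ := by
  rw [h.integral_add_pow hX hY]
  simp [sum_range_succ, hX0, hY0, Nat.choose]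
  ring

end Centred

section IndependentSums

variable {ι : Type*} {X : ι → Ω → ℝ}

lemma ProbabilityTheory.iIndepFun.indepFun_fun_finsetSum_of_notMem (h : iIndepFun X μ)
    (hX : ∀ i, AEMeasurable (X i) μ) {s : Finset ι} {j : ι} (hj : j ∉ s) :
    IndepFun (X j) (fun ω => ∑ i ∈ s, X i ω) μ := by
  convert (h.indepFun_finsetSum_of_notMem₀ hX hj).symm using 1
  ext ω
  simp

variable [IsProbabilityMeasure μ]

lemma ProbabilityTheory.iIndepFun.integral_sum_sq (h : iIndepFun X μ)
    (hX : ∀ i, MemLp (X i) 2 μ) (hX0 : ∀ i, ∫ ω, X i ω ∂μ = 0) (s : Finset ι) :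
    ∫ ω, (∑ i ∈ s, X i ω) ^ 2 ∂μ = ∑ i ∈ s, ∫ ω, X i ω ^ 2 ∂μ := by
  classical
  induction s using Finset.induction_on with
  | empty => simp
  | insert j s hj ih =>
    have hS0 : ∫ ω, ∑ i ∈ s, X i ω ∂μ = 0 := by
      rw [integral_finsetSum s fun i _ => (hX i).integrable one_le_two]
      simp [hX0]
    simp only [sum_insert hj]
    rw [(h.indepFun_fun_finsetSum_of_notMem (fun i => (hX i).aestronglyMeasurable.aemeasurable)
      hj).integral_add_sq_of_integral_eq_zero (hX j) (memLp_finsetSum s fun i _ => hX i) (hX0 j)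
      hS0, ih]

lemma ProbabilityTheory.iIndepFun.integral_sum_pow_four_le (h : iIndepFun X μ)
    (hX : ∀ i, MemLp (X i) 4 μ) (hX0 : ∀ i, ∫ ω, X i ω ∂μ = 0)
    (hX4 : ∀ i, ∫ ω, X i ω ^ 4 ∂μ ≤ 3 * (∫ ω, X i ω ^ 2 ∂μ) ^ 2) (s : Finset ι) :
    ∫ ω, (∑ i ∈ s, X i ω) ^ 4 ∂μ ≤ 3 * (∫ ω, (∑ i ∈ s, X i ω) ^ 2 ∂μ) ^ 2 := by
  classical
  induction s using Finset.induction_on with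
  | empty => simp
  | insert j s hj ih =>
    have hind := h.indepFun_fun_finsetSum_of_notMem
      (fun i => (hX i).aestronglyMeasurable.aemeasurable) hj
    have hS : MemLp (fun ω => ∑ i ∈ s, X i ω) 4 μ := memLp_finsetSum s fun i _ => hX i
    have hS0 : ∫ ω, ∑ i ∈ s, X i ω ∂μ = 0 := by
      rw [integral_finsetSum s fun i _ => (hX i).integrable (by norm_num)]
      simp [hX0]
    simp only [sum_insert hj]
    rw [hind.integral_add_pow_four_of_integral_eq_zero (hX j) hS (hX0 j) hS0,
      hind.integral_add_sq_of_integral_eq_zero ((hX j).mono_exponent (by norm_num))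
        (hS.mono_exponent (by norm_num)) (hX0 j) hS0]
    nlinarith [hX4 j]

end IndependentSums

lemma sq_integral_le_measureReal_univ_mul_integral_sq {ν : Measure Ω} [IsFiniteMeasure ν]
    {Z : Ω → ℝ} (hZ : MemLp Z 2 ν) :
    (∫ ω, Z ω ∂ν) ^ 2 ≤ ν.real Set.univ * ∫ ω, Z ω ^ 2 ∂ν := by
  have hquad : ∀ t : ℝ,
      0 ≤ ν.real Set.univ * (t * t) + (-2 * ∫ ω, Z ω ∂ν) * t + ∫ ω, Z ω ^ 2 ∂ν := by
    intro t
    have hlin : Integrable (fun ω => 2 * Z ω * t) ν :=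
      ((hZ.integrable one_le_two).const_mul 2).mul_const t
    have hexpand : ∫ ω, (Z ω - t) ^ 2 ∂ν =
        ν.real Set.univ * (t * t) + (-2 * ∫ ω, Z ω ∂ν) * t + ∫ ω, Z ω ^ 2 ∂ν := by
      simp_rw [sub_sq]
      rw [integral_add (f := fun ω => Z ω ^ 2 - 2 * Z ω * t) (hZ.integrable_sq.sub hlin)
          (integrable_const _),
        integral_sub hZ.integrable_sq hlin, integral_mul_const, integral_const_mul,
        integral_const, smul_eq_mul]
      ring
    exact hexpand ▸ integral_nonneg fun ω => sq_nonneg _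
  have hdiscrim := discrim_le_zero hquad
  rw [discrim] at hdiscrim
  linarith

theorem paley_zygmund [IsProbabilityMeasure μ] {Z : Ω → ℝ} (hZ : MemLp Z 2 μ)
    (hm : 0 ≤ ∫ ω, Z ω ∂μ) {θ : ℝ} (hθ₀ : 0 ≤ θ) (hθ₁ : θ ≤ 1) :
    (1 - θ) ^ 2 * (∫ ω, Z ω ∂μ) ^ 2 ≤
      (∫ ω, Z ω ^ 2 ∂μ) * μ.real {ω | θ * ∫ ω, Z ω ∂μ < Z ω} := by
  set m := ∫ ω, Z ω ∂μ
  set A := {ω | θ * m < Z ω}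
  have hA : NullMeasurableSet A μ := nullMeasurableSet_lt aemeasurable_const hZ.aemeasurable
  have hZint := hZ.integrable one_le_two
  have hcompl : ∫ ω in Aᶜ, Z ω ∂μ ≤ θ * m :=
    calc ∫ ω in Aᶜ, Z ω ∂μ ≤ ∫ ω in Aᶜ, θ * m ∂μ :=
          setIntegral_mono_on₀ hZint.integrableOn (integrable_const _).integrableOn hA.compl
            fun ω hω => not_lt.mp hω
      _ = μ.real Aᶜ * (θ * m) := by rw [setIntegral_const, smul_eq_mul]
      _ ≤ θ * m := mul_le_of_le_one_left (by positivity) measureReal_le_one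
  have hlower : (1 - θ) * m ≤ ∫ ω in A, Z ω ∂μ := by
    linarith [integral_add_compl₀ hA hZint]
  calc (1 - θ) ^ 2 * m ^ 2 = ((1 - θ) * m) ^ 2 := by ring
    _ ≤ (∫ ω in A, Z ω ∂μ) ^ 2 := pow_le_pow_left₀ (by nlinarith) hlower 2
    _ ≤ μ.real A * ∫ ω in A, Z ω ^ 2 ∂μ := by
        simpa [measureReal_restrict_apply_univ] using
          sq_integral_le_measureReal_univ_mul_integral_sq (hZ.restrict A)
    _ ≤ μ.real A * ∫ ω, Z ω ^ 2 ∂μ :=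
        mul_le_mul_of_nonneg_left
          (setIntegral_le_integral hZ.integrable_sq (ae_of_all _ fun ω => sq_nonneg _))
          measureReal_nonneg
    _ = _ := mul_comm _ _

lemma paley_zygmund_sq [IsProbabilityMeasure μ] {S : Ω → ℝ} (hS : MemLp S 4 μ) {θ : ℝ}
    (hθ₀ : 0 ≤ θ) (hθ₁ : θ ≤ 1) :
    (1 - θ) ^ 2 * (∫ ω, S ω ^ 2 ∂μ) ^ 2 ≤
      (∫ ω, S ω ^ 4 ∂μ) * μ.real {ω | θ * ∫ ω, S ω ^ 2 ∂μ < S ω ^ 2} := by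
  have hS2 : MemLp (fun ω => S ω ^ 2) 2 μ := by
    refine (memLp_two_iff_integrable_sq (hS.aestronglyMeasurable.pow 2)).mpr ?_
    simpa only [Pi.pow_apply, ← pow_mul] using hS.integrable_pow_of_le le_rfl
  simpa only [← pow_mul] using
    paley_zygmund hS2 (integral_nonneg fun ω => sq_nonneg _) hθ₀ hθ₁

section UniformIcc

variable {g : Ω → ℝ}

lemma integral_pow_half_smul_volume_Icc (k : ℕ) :
    ∫ x, x ^ k ∂((2 : ENNReal)⁻¹ • volume.restrict (Set.Icc (-1 : ℝ) 1)) =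
      (1 - (-1) ^ (k + 1)) / (2 * (k + 1)) := by
  rw [integral_smul_measure, integral_Icc_eq_integral_Ioc,
    ← intervalIntegral.integral_of_le (by norm_num), integral_pow]
  simp only [ENNReal.toReal_inv, ENNReal.toReal_ofNat, one_pow, smul_eq_mul]
  field_simp

lemma integral_pow_of_map_eq_half_smul_volume_Icc (hg : Measurable g)
    (h : μ.map g = (2 : ENNReal)⁻¹ • volume.restrict (Set.Icc (-1 : ℝ) 1)) (k : ℕ) :
    ∫ ω, g ω ^ k ∂μ = (1 - (-1) ^ (k + 1)) / (2 * (k + 1)) := by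
  rw [← integral_pow_half_smul_volume_Icc, ← h,
    integral_map hg.aemeasurable (continuous_pow k).aestronglyMeasurable]

lemma memLp_top_of_map_eq_half_smul_volume_Icc (hg : Measurable g)
    (h : μ.map g = (2 : ENNReal)⁻¹ • volume.restrict (Set.Icc (-1 : ℝ) 1)) :
    MemLp g ⊤ μ := by
  refine memLp_top_of_bound hg.aestronglyMeasurable 1
    (ae_of_ae_map (p := fun x : ℝ => ‖x‖ ≤ 1) hg.aemeasurable ?_)
  rw [h]
  refine Measure.ae_smul_measure ?_ _
  exact ae_restrict_of_forall_mem measurableSet_Icc fun x hx => abs_le.mpr hx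

end UniformIcc

end

/-- If `u` is a unit vector and `η_i` are i.i.d. uniform on `[-1,1]`, then
`P(|∑ u_i η_i| ≥ 1/3) ≥ 4/27`. -/
theorem stmt_7 {Ω : Type*} [MeasurableSpace Ω] (μ : Measure Ω) [IsProbabilityMeasure μ]
    (n : ℕ) (u : Fin n → ℝ) (hu : ∑ i, u i ^ 2 = 1)
    (η : Fin n → Ω → ℝ) (hmeas : ∀ i, Measurable (η i))
    (hindep : iIndepFun η μ)
    (hunif : ∀ i, Measure.map (η i) μ =
      (2 : ENNReal)⁻¹ • (volume.restrict (Set.Icc (-1 : ℝ) 1))) :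
    (4 : ℝ) / 27 ≤ (μ {ω | (1 : ℝ) / 3 ≤ |∑ i, u i * η i ω|}).toReal := by
  set X : Fin n → Ω → ℝ := fun i ω => u i * η i ω
  have hX : ∀ i, MemLp (X i) 4 μ := fun i =>
    ((memLp_top_of_map_eq_half_smul_volume_Icc (hmeas i) (hunif i)).const_mul (u i)).mono_exponent
      le_top
  have hmoment : ∀ i (k : ℕ),
      ∫ ω, X i ω ^ k ∂μ = u i ^ k * ((1 - (-1) ^ (k + 1)) / (2 * (k + 1))) := fun i k => by
    simp only [X, mul_pow]
    rw [integral_const_mul, integral_pow_of_map_eq_half_smul_volume_Icc (hmeas i) (hunif i)]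
  have hXindep : iIndepFun X μ := hindep.comp _ fun i => measurable_const_mul (u i)
  have hX0 : ∀ i, ∫ ω, X i ω ∂μ = 0 := fun i => by simpa using hmoment i 1
  have hS2 : ∫ ω, (∑ i, X i ω) ^ 2 ∂μ = 1 / 3 := by
    rw [hXindep.integral_sum_sq (fun i => (hX i).mono_exponent (by norm_num)) hX0]
    simp only [hmoment]
    rw [← sum_mul, hu]
    norm_num
  have hS4 : ∫ ω, (∑ i, X i ω) ^ 4 ∂μ ≤ 1 / 3 := by
    refine (hXindep.integral_sum_pow_four_le hX hX0 (fun i => ?_) _).trans (by rw [hS2]; norm_num)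
    rw [hmoment, hmoment]
    nlinarith [pow_nonneg (sq_nonneg (u i)) 2]
  have hPZ := paley_zygmund_sq (memLp_finsetSum univ fun i _ => hX i) (θ := 1 / 3)
    (by norm_num) (by norm_num)
  rw [hS2] at hPZ
  calc (4 : ℝ) / 27 ≤ μ.real {ω | 1 / 3 * (1 / 3) < (∑ i, X i ω) ^ 2} := by
        nlinarith [measureReal_nonneg (μ := μ) (s := {ω | 1 / 3 * (1 / 3) < (∑ i, X i ω) ^ 2})]
    _ ≤ μ.real {ω | (1 : ℝ) / 3 ≤ |∑ i, X i ω|} := measureReal_mono fun ω hω => by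
        have hω : (1 / 3) ^ 2 < (∑ i, X i ω) ^ 2 := by linarith [hω.out]
        simpa using (sq_lt_sq.mp hω).le
end

section
/- Let Y be a symmetric random vector in a Banach space F, η a random variable independent of Y with P(η=1)=P(η=0)=1/2, and suppose P(|x*(Y)| ≥ t) ≤ P(|x*(X)| ≥ t) for all x* ∈ F*, t > 0, where X is a symmetric random vector. If X_1, X_2 are independent copies of X and Y_1, Y_2 are independent copies of Y, and η is independent of (Y_1, Y_2), then for every pair (x_1*, x_2*) ∈ F* × F* and t > 0: P(|x_1*(ηY_1) + x_2*(ηY_2)| ≥ t) ≤ P(|x_1*(X_1) + x_2*(X_2)| ≥ t). -/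
/-!
On `{η = 0}` the left-hand sum vanishes and on `{η = 1}` it is `x₁(Y₁) + x₂(Y₂)`, so by
independence of `η` the left side is at most `½ P(|x₁(Y₁)| + |x₂(Y₂)| ≥ t)`. Tail domination of
independent summands passes to their sum (compare the product laws one factor at a time), so `Y`
may be replaced by `X` here. Finally `|a| + |b| = max |a + b| |a - b|`, and since `X₂` is symmetric
and independent of `X₁`, `x₁(X₁) - x₂(X₂)` has the law of `x₁(X₁) + x₂(X₂)`; hence
`P(|x₁(X₁)| + |x₂(X₂)| ≥ t) ≤ 2 P(|x₁(X₁) + x₂(X₂)| ≥ t)`.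
-/

open MeasureTheory ProbabilityTheory

theorem abs_add_abs_eq_max_abs_add_abs_sub {α : Type*} [AddCommGroup α] [LinearOrder α]
    [IsOrderedAddMonoid α] (a b : α) : |a| + |b| = max |a + b| |a - b| := by
  grind [abs_of_nonneg, abs_of_nonpos]

theorem MeasureTheory.Measure.prod_setOf_le_add_mono {ν₁ ν₂ ν₁' ν₂' : Measure ℝ} [SFinite ν₁]
    [SFinite ν₂] [SFinite ν₁'] [SFinite ν₂'] (h₁ : ∀ s, ν₁ (Set.Ici s) ≤ ν₁' (Set.Ici s))
    (h₂ : ∀ s, ν₂ (Set.Ici s) ≤ ν₂' (Set.Ici s)) (t : ℝ) :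
    (ν₁.prod ν₂) {p | t ≤ p.1 + p.2} ≤ (ν₁'.prod ν₂') {p | t ≤ p.1 + p.2} := by
  have hmeas : MeasurableSet {p : ℝ × ℝ | t ≤ p.1 + p.2} :=
    measurableSet_le measurable_const (measurable_fst.add measurable_snd)
  have slice_fst (a : ℝ) : Prod.mk a ⁻¹' {p : ℝ × ℝ | t ≤ p.1 + p.2} = Set.Ici (t - a) := by
    ext; simp [add_comm]
  have slice_snd (b : ℝ) : (·, b) ⁻¹' {p : ℝ × ℝ | t ≤ p.1 + p.2} = Set.Ici (t - b) := by
    ext; simp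
  calc (ν₁.prod ν₂) {p | t ≤ p.1 + p.2} ≤ (ν₁.prod ν₂') {p | t ≤ p.1 + p.2} := by
        simp only [Measure.prod_apply hmeas, slice_fst]
        exact lintegral_mono fun a => h₂ _
    _ ≤ (ν₁'.prod ν₂') {p | t ≤ p.1 + p.2} := by
        simp only [Measure.prod_apply_symm hmeas, slice_snd]
        exact lintegral_mono fun b => h₁ _

section

variable {Ω Ω' : Type*} [MeasurableSpace Ω] [MeasurableSpace Ω'] {μ : Measure Ω}
  {ν : Measure Ω'}

theorem ae_eq_or_eq_of_measure_add_eq_one [IsProbabilityMeasure μ] {α : Type*}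
    [MeasurableSpace α] [MeasurableSingletonClass α] {f : Ω → α} (hf : Measurable f) {a b : α}
    (hab : a ≠ b) (h : μ {ω | f ω = a} + μ {ω | f ω = b} = 1) :
    ∀ᵐ ω ∂μ, f ω = a ∨ f ω = b := by
  have hdisj : Disjoint {ω | f ω = a} {ω | f ω = b} :=
    Set.disjoint_left.2 fun ω ha hb => hab (ha.symm.trans hb)
  rw [ae_iff]
  change μ {ω | f ω = a ∨ f ω = b}ᶜ = 0
  rw [prob_compl_eq_zero_iff, Set.ofPred_or,
    measure_union hdisj (hf (measurableSet_singleton b)), h]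
  exact (hf (measurableSet_singleton a)).union (hf (measurableSet_singleton b))

theorem measure_setOf_smul_mem_le {E : Type*} [AddCommMonoid E] [Module ℝ E]
    [MeasurableSpace E] {η : Ω → ℝ} {Z : Ω → E} (hη : ∀ᵐ ω ∂μ, η ω = 0 ∨ η ω = 1)
    (hind : IndepFun η Z μ) {S : Set E} (hS : MeasurableSet S) (h0 : (0 : E) ∉ S) :
    μ {ω | η ω • Z ω ∈ S} ≤ μ {ω | η ω = 1} * μ (Z ⁻¹' S) := by
  calc μ {ω | η ω • Z ω ∈ S} ≤ μ (η ⁻¹' {1} ∩ Z ⁻¹' S) := by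
        refine measure_mono_ae ?_
        filter_upwards [hη] with ω hω (hmem : η ω • Z ω ∈ S)
        change η ω = 1 ∧ Z ω ∈ S
        rcases hω with h | h
        · rw [h, zero_smul] at hmem
          exact absurd hmem h0
        · rw [h, one_smul] at hmem
          exact ⟨h, hmem⟩
    _ = μ {ω | η ω = 1} * μ (Z ⁻¹' S) :=
        hind.measure_inter_preimage_eq_mul _ _ (measurableSet_singleton 1) hS

theorem ProbabilityTheory.IndepFun.measure_preimage_prodMk [IsFiniteMeasure μ] {β γ : Type*}
    [MeasurableSpace β] [MeasurableSpace γ] {U₁ : Ω → β} {U₂ : Ω → γ} (hU₁ : AEMeasurable U₁ μ)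
    (hU₂ : AEMeasurable U₂ μ) (h : IndepFun U₁ U₂ μ) {S : Set (β × γ)} (hS : MeasurableSet S) :
    μ ((fun ω => (U₁ ω, U₂ ω)) ⁻¹' S) = ((μ.map U₁).prod (μ.map U₂)) S := by
  rw [← (indepFun_iff_map_prod_eq_prod_map_map hU₁ hU₂).1 h,
    Measure.map_apply_of_aemeasurable (hU₁.prodMk hU₂) hS]

theorem measure_setOf_le_add_le_of_indepFun [IsFiniteMeasure μ] [IsFiniteMeasure ν]
    {U₁ U₂ : Ω → ℝ} {V₁ V₂ : Ω' → ℝ} (hU₁ : AEMeasurable U₁ μ) (hU₂ : AEMeasurable U₂ μ)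
    (hV₁ : AEMeasurable V₁ ν) (hV₂ : AEMeasurable V₂ ν) (hU : IndepFun U₁ U₂ μ)
    (hV : IndepFun V₁ V₂ ν) (h₁ : ∀ s, μ {ω | s ≤ U₁ ω} ≤ ν {ω | s ≤ V₁ ω})
    (h₂ : ∀ s, μ {ω | s ≤ U₂ ω} ≤ ν {ω | s ≤ V₂ ω}) (t : ℝ) :
    μ {ω | t ≤ U₁ ω + U₂ ω} ≤ ν {ω | t ≤ V₁ ω + V₂ ω} := by
  have hmeas : MeasurableSet {p : ℝ × ℝ | t ≤ p.1 + p.2} :=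
    measurableSet_le measurable_const (measurable_fst.add measurable_snd)
  have map_Ici_le (s : ℝ) {W : Ω → ℝ} {W' : Ω' → ℝ} (hW : AEMeasurable W μ)
      (hW' : AEMeasurable W' ν) (h : μ {ω | s ≤ W ω} ≤ ν {ω | s ≤ W' ω}) :
      μ.map W (Set.Ici s) ≤ ν.map W' (Set.Ici s) := by
    rwa [Measure.map_apply_of_aemeasurable hW measurableSet_Ici,
      Measure.map_apply_of_aemeasurable hW' measurableSet_Ici]
  calc μ {ω | t ≤ U₁ ω + U₂ ω} = ((μ.map U₁).prod (μ.map U₂)) {p | t ≤ p.1 + p.2} :=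
        hU.measure_preimage_prodMk hU₁ hU₂ hmeas
    _ ≤ ((ν.map V₁).prod (ν.map V₂)) {p | t ≤ p.1 + p.2} :=
        Measure.prod_setOf_le_add_mono (fun s => map_Ici_le s hU₁ hV₁ (h₁ s))
          (fun s => map_Ici_le s hU₂ hV₂ (h₂ s)) t
    _ = ν {ω | t ≤ V₁ ω + V₂ ω} := (hV.measure_preimage_prodMk hV₁ hV₂ hmeas).symm

theorem ProbabilityTheory.IdentDistrib.identDistrib_neg {E : Type*} [MeasurableSpace E] [Neg E]
    [MeasurableNeg E] {X' : Ω → E} {X : Ω' → E} (h : IdentDistrib X' X μ ν)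
    (hsymm : ν.map X = ν.map (fun ω => -X ω)) : IdentDistrib X' (fun ω => -X' ω) μ μ :=
  (h.trans ⟨h.aemeasurable_snd, h.aemeasurable_snd.neg, hsymm⟩).trans (h.comp measurable_neg).symm

theorem measure_setOf_le_comp_le_of_identDistrib {E : Type*} [MeasurableSpace E]
    {Y' X' : Ω → E} {Y X : Ω' → E} {g : E → ℝ} (hg : Measurable g) (hg₀ : ∀ v, 0 ≤ g v)
    (hY : IdentDistrib Y' Y μ ν) (hX : IdentDistrib X' X μ ν)
    (hdom : ∀ t, 0 < t → ν {ω | t ≤ g (Y ω)} ≤ ν {ω | t ≤ g (X ω)}) (s : ℝ) :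
    μ {ω | s ≤ g (Y' ω)} ≤ μ {ω | s ≤ g (X' ω)} := by
  rcases lt_or_ge 0 s with hs | hs
  · have hS : MeasurableSet {v | s ≤ g v} := measurableSet_le measurable_const hg
    exact (hY.measure_mem_eq hS).trans_le ((hdom s hs).trans_eq (hX.measure_mem_eq hS).symm)
  · have huniv (Z : Ω → E) : {ω | s ≤ g (Z ω)} = Set.univ :=
      Set.eq_univ_of_forall fun ω => hs.trans (hg₀ _)
    rw [huniv, huniv]

theorem ProbabilityTheory.IndepFun.identDistrib_prodMk_neg_right [IsFiniteMeasure μ]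
    {E F : Type*} [MeasurableSpace E] [MeasurableSpace F] [Neg F] [MeasurableNeg F]
    {X₁ : Ω → E} {X₂ : Ω → F} (hX₁ : AEMeasurable X₁ μ) (hind : IndepFun X₁ X₂ μ)
    (hsymm : IdentDistrib X₂ (fun ω => -X₂ ω) μ μ) :
    IdentDistrib (fun ω => (X₁ ω, X₂ ω)) (fun ω => (X₁ ω, -X₂ ω)) μ μ := by
  have hneg : μ.map (fun ω => (X₁ ω, -X₂ ω)) = (μ.map X₁).prod (μ.map fun ω => -X₂ ω) :=
    (indepFun_iff_map_prod_eq_prod_map_map hX₁ hsymm.aemeasurable_snd).1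
      (hind.comp measurable_id measurable_neg)
  refine ⟨hX₁.prodMk hsymm.aemeasurable_fst, hX₁.prodMk hsymm.aemeasurable_snd, ?_⟩
  rw [(indepFun_iff_map_prod_eq_prod_map_map hX₁ hsymm.aemeasurable_fst).1 hind, hsymm.map_eq,
    hneg]

theorem measure_setOf_le_abs_add_abs_le_two_mul [IsFiniteMeasure μ] {U₁ U₂ : Ω → ℝ}
    (hU₁ : AEMeasurable U₁ μ) (hind : IndepFun U₁ U₂ μ)
    (hsymm : IdentDistrib U₂ (fun ω => -U₂ ω) μ μ) (t : ℝ) :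
    μ {ω | t ≤ |U₁ ω| + |U₂ ω|} ≤ 2 * μ {ω | t ≤ |U₁ ω + U₂ ω|} := by
  have hflip : μ {ω | t ≤ |U₁ ω - U₂ ω|} = μ {ω | t ≤ |U₁ ω + U₂ ω|} := by
    simpa only [Set.preimage_ofPred_eq, sub_neg_eq_add] using
      (hind.identDistrib_prodMk_neg_right hU₁ hsymm).measure_mem_eq
        (s := {p : ℝ × ℝ | t ≤ |p.1 - p.2|})
        (measurableSet_le measurable_const (measurable_fst.sub measurable_snd).abs)
  calc μ {ω | t ≤ |U₁ ω| + |U₂ ω|}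
      ≤ μ ({ω | t ≤ |U₁ ω + U₂ ω|} ∪ {ω | t ≤ |U₁ ω - U₂ ω|}) :=
        measure_mono fun ω (hω : t ≤ |U₁ ω| + |U₂ ω|) => by
          rwa [abs_add_abs_eq_max_abs_add_abs_sub, le_max_iff] at hω
    _ ≤ μ {ω | t ≤ |U₁ ω + U₂ ω|} + μ {ω | t ≤ |U₁ ω - U₂ ω|} := measure_union_le _ _
    _ = 2 * μ {ω | t ≤ |U₁ ω + U₂ ω|} := by rw [hflip, two_mul]

end

theorem stmt_19_general {Ω F : Type*} [MeasurableSpace Ω] (μ : Measure Ω) [IsProbabilityMeasure μ]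
    [NormedAddCommGroup F] [NormedSpace ℝ F] [MeasurableSpace F] [BorelSpace F]
    (X Y : Ω → F)
    (hXsymm : Measure.map X μ = Measure.map (fun ω => -X ω) μ)
    (X₁ X₂ Y₁ Y₂ : Ω → F)
    (hXind : IndepFun X₁ X₂ μ) (hYind : IndepFun Y₁ Y₂ μ)
    (hX₁d : IdentDistrib X₁ X μ μ) (hX₂d : IdentDistrib X₂ X μ μ)
    (hY₁d : IdentDistrib Y₁ Y μ μ) (hY₂d : IdentDistrib Y₂ Y μ μ)
    (η : Ω → ℝ) (hη : Measurable η)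
    (hη1 : μ {ω | η ω = 1} = 1 / 2) (hη0 : μ {ω | η ω = 0} = 1 / 2)
    (hηind : IndepFun η (fun ω => (Y₁ ω, Y₂ ω)) μ)
    (hdom : ∀ (x : F →L[ℝ] ℝ) (t : ℝ), 0 < t →
      μ {ω | t ≤ |x (Y ω)|} ≤ μ {ω | t ≤ |x (X ω)|}) :
    ∀ (x₁ x₂ : F →L[ℝ] ℝ) (t : ℝ), 0 < t →
      μ {ω | t ≤ |x₁ (η ω • Y₁ ω) + x₂ (η ω • Y₂ ω)|} ≤
        μ {ω | t ≤ |x₁ (X₁ ω) + x₂ (X₂ ω)|} := by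
  intro x₁ x₂ t ht
  have hη01 : ∀ᵐ ω ∂μ, η ω = 0 ∨ η ω = 1 :=
    ae_eq_or_eq_of_measure_add_eq_one hη zero_ne_one (by rw [hη0, hη1, ENNReal.add_halves])
  have hS : MeasurableSet {p : F × F | t ≤ |x₁ p.1 + x₂ p.2|} :=
    measurableSet_le measurable_const
      ((x₁.measurable.comp measurable_fst).add (x₂.measurable.comp measurable_snd)).abs
  have hx₁ : Measurable fun v => |x₁ v| := x₁.measurable.abs
  have hx₂ : Measurable fun v => |x₂ v| := x₂.measurable.abs
  have hsymm₂ : IdentDistrib (fun ω => x₂ (X₂ ω)) (fun ω => -x₂ (X₂ ω)) μ μ := by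
    simpa only [Function.comp_def, map_neg] using
      (hX₂d.identDistrib_neg hXsymm).comp x₂.measurable
  calc μ {ω | t ≤ |x₁ (η ω • Y₁ ω) + x₂ (η ω • Y₂ ω)|}
      ≤ 2⁻¹ * μ {ω | t ≤ |x₁ (Y₁ ω) + x₂ (Y₂ ω)|} := by
        rw [← one_div, ← hη1]
        exact measure_setOf_smul_mem_le hη01 hηind hS (by simpa using ht)
    _ ≤ 2⁻¹ * μ {ω | t ≤ |x₁ (Y₁ ω)| + |x₂ (Y₂ ω)|} := by
        gcongr 2⁻¹ * ?_
        exact measure_mono fun ω (hω : t ≤ |x₁ (Y₁ ω) + x₂ (Y₂ ω)|) => hω.trans (abs_add_le _ _)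
    _ ≤ 2⁻¹ * μ {ω | t ≤ |x₁ (X₁ ω)| + |x₂ (X₂ ω)|} := by
        gcongr 2⁻¹ * ?_
        exact measure_setOf_le_add_le_of_indepFun
          (hx₁.comp_aemeasurable hY₁d.aemeasurable_fst)
          (hx₂.comp_aemeasurable hY₂d.aemeasurable_fst)
          (hx₁.comp_aemeasurable hX₁d.aemeasurable_fst)
          (hx₂.comp_aemeasurable hX₂d.aemeasurable_fst) (hYind.comp hx₁ hx₂) (hXind.comp hx₁ hx₂)
          (measure_setOf_le_comp_le_of_identDistrib hx₁ (fun _ => abs_nonneg _) hY₁d hX₁d (hdom x₁))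
          (measure_setOf_le_comp_le_of_identDistrib hx₂ (fun _ => abs_nonneg _) hY₂d hX₂d (hdom x₂))
          t
    _ ≤ 2⁻¹ * (2 * μ {ω | t ≤ |x₁ (X₁ ω) + x₂ (X₂ ω)|}) := by
        gcongr 2⁻¹ * ?_
        exact measure_setOf_le_abs_add_abs_le_two_mul
          (x₁.measurable.comp_aemeasurable hX₁d.aemeasurable_fst)
          (hXind.comp x₁.measurable x₂.measurable) hsymm₂ t
    _ = μ {ω | t ≤ |x₁ (X₁ ω) + x₂ (X₂ ω)|} :=
        ENNReal.inv_mul_cancel_left two_ne_zero ENNReal.ofNat_ne_top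

/-- n = 2 case of Kwapień–Woyczyński: for symmetric `X`, `Y` with
`Y ≺ X` weakly, independent copies `X₁, X₂` of `X` and `Y₁, Y₂` of `Y`, and a
Bernoulli(1/2) variable `η` independent of `(Y₁, Y₂)`, for all functionals `x₁*, x₂*`
and `t > 0`: `P(|x₁*(ηY₁) + x₂*(ηY₂)| ≥ t) ≤ P(|x₁*(X₁) + x₂*(X₂)| ≥ t)`. -/
theorem stmt_19 {Ω F : Type*} [MeasurableSpace Ω] (μ : Measure Ω) [IsProbabilityMeasure μ]
    [NormedAddCommGroup F] [NormedSpace ℝ F] [MeasurableSpace F] [BorelSpace F]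
    (X Y : Ω → F) (hX : Measurable X) (hY : Measurable Y)
    (hXsymm : Measure.map X μ = Measure.map (fun ω => -X ω) μ)
    (hYsymm : Measure.map Y μ = Measure.map (fun ω => -Y ω) μ)
    (X₁ X₂ Y₁ Y₂ : Ω → F)
    (hX₁ : Measurable X₁) (hX₂ : Measurable X₂) (hY₁ : Measurable Y₁) (hY₂ : Measurable Y₂)
    (hXind : IndepFun X₁ X₂ μ) (hYind : IndepFun Y₁ Y₂ μ)
    (hX₁d : IdentDistrib X₁ X μ μ) (hX₂d : IdentDistrib X₂ X μ μ)
    (hY₁d : IdentDistrib Y₁ Y μ μ) (hY₂d : IdentDistrib Y₂ Y μ μ)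
    (η : Ω → ℝ) (hη : Measurable η)
    (hη1 : μ {ω | η ω = 1} = 1 / 2) (hη0 : μ {ω | η ω = 0} = 1 / 2)
    (hηind : IndepFun η (fun ω => (Y₁ ω, Y₂ ω)) μ)
    (hdom : ∀ (x : F →L[ℝ] ℝ) (t : ℝ), 0 < t →
      μ {ω | t ≤ |x (Y ω)|} ≤ μ {ω | t ≤ |x (X ω)|}) :
    ∀ (x₁ x₂ : F →L[ℝ] ℝ) (t : ℝ), 0 < t →
      μ {ω | t ≤ |x₁ (η ω • Y₁ ω) + x₂ (η ω • Y₂ ω)|} ≤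
        μ {ω | t ≤ |x₁ (X₁ ω) + x₂ (X₂ ω)|} :=
  stmt_19_general μ X Y hXsymm X₁ X₂ Y₁ Y₂ hXind hYind hX₁d hX₂d hY₁d hY₂d η hη hη1 hη0 hηind hdom
end
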